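/- Let A ⊂ ℤⁿ be a finite set with 0 in the interior of Q = conv(A), and let g : ℝⁿ∖{0} → ℝⁿ be continuous and positively homogeneous of degree 1 such that for every proper face F of Q and every p ∈ cone(F) one has max_{α ∈ A∖A_F} ⟨α, g(p)⟩ < max_{β ∈ A_F} ⟨β, g(p)⟩. Then for every ε'' ∈ (0, π/2) there exists ε' > 0 such that: for every c : A → ℂ with c_α ≠ 0 and |arg c_α| < ε' for all α ∈ A, there exist an open set V ⊆ (ℝⁿ∖{0}) × ℝⁿ, conical in the first variable and containing the skeleton Λ := ⋃_F {(p, θ) : p ∈ cone(F), ⟨β, θ⟩ ∈ ℤ for all β ∈ A_F} (union over all proper faces F of Q), and a radius R > 0, such that for every (p, θ) ∈ V with ‖p‖ ≥ R the value W(g(p), θ) is nonzero and satisfies |arg W(g(p), θ)| < ε''. -/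

import Mathlib

/-!
The gap hypothesis holds with a uniform margin: there is `μ > 0` such that along the cone over
any proper face `F`, each exponent `α ∉ F` is beaten by some `β ∈ F` by at least `μ‖p‖`. To see
this, sort the points `u` of proper faces by the finitely many types `(α, A ∩ F, T)`, where `T` is
the support of a convex combination with positive weights representing `u`. An extreme set
containing such a combination contains `conv T`, so the points of one type lie in the compact set
`conv T`, which sits inside a single proper face, avoids `0` and carries a positive gap.

Take for `V` the set of `(p, θ)` for which every exponent is either beaten by `μ‖p‖` or has
`⟨α, θ⟩` within `ε/(16π)` of an integer. For `‖p‖ ≥ R` the beaten monomials are exponentially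
small compared with the largest one, which is never beaten, while all the others have phase
within `ε/4` of `0`; hence `|arg W| < ε`.
-/

attribute [local instance] Classical.propDecidable

noncomputable section

def toR {n : ℕ} (a : Fin n → ℤ) : Fin n → ℝ := fun i => (a i : ℝ)

def dotZ {n : ℕ} (a : Fin n → ℤ) (x : Fin n → ℝ) : ℝ := ∑ i, (a i : ℝ) * x i

/-- `W_B(x, θ) = Σ_{α ∈ B} c_α · exp(⟨α, x⟩ + 2πi⟨α, θ⟩)`. -/
def Wpot {n : ℕ} (B : Finset (Fin n → ℤ)) (c : (Fin n → ℤ) → ℂ) (x θ : Fin n → ℝ) : ℂ :=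
  ∑ α ∈ B, c α * Complex.exp ((dotZ α x : ℂ) + 2 * (Real.pi : ℂ) * Complex.I * (dotZ α θ : ℂ))

def cone {n : ℕ} (F : Set (Fin n → ℝ)) : Set (Fin n → ℝ) :=
  {p | ∃ t : ℝ, 0 < t ∧ ∃ u ∈ F, p = t • u}

/-- The skeleton `Λ = ⋃_F {(p,θ) : p ∈ cone(F), ⟨β,θ⟩ ∈ ℤ ∀ β ∈ A_F}`, the union over
all proper faces `F` of `Q = conv(A)`. -/
def skeleton {n : ℕ} (A : Finset (Fin n → ℤ)) : Set ((Fin n → ℝ) × (Fin n → ℝ)) :=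
  {q | ∃ F : Set (Fin n → ℝ),
    IsExtreme ℝ (convexHull ℝ (toR '' (A : Set (Fin n → ℤ)))) F ∧
    F ≠ convexHull ℝ (toR '' (A : Set (Fin n → ℤ))) ∧
    q.1 ∈ cone F ∧ ∀ β ∈ A, toR β ∈ F → ∃ m : ℤ, dotZ β q.2 = (m : ℝ)}

open Filter Topology

section ConvexCombination

variable {E : Type*} [AddCommGroup E] [Module ℝ E]

def IsPosCombination (T : Finset E) (x : E) : Prop :=
  ∃ w : E → ℝ, (∀ t ∈ T, 0 < w t) ∧ ∑ t ∈ T, w t = 1 ∧ ∑ t ∈ T, w t • t = x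

theorem IsPosCombination.mem_convexHull {T : Finset E} {x : E} (hx : IsPosCombination T x) :
    x ∈ convexHull ℝ (T : Set E) := by
  obtain ⟨w, hw0, hw1, rfl⟩ := hx
  exact (convex_convexHull ℝ _).sum_mem (fun t ht => (hw0 t ht).le) hw1
    fun t ht => subset_convexHull ℝ _ ht

theorem exists_isPosCombination_of_mem_convexHull {S : Finset E} {x : E}
    (hx : x ∈ convexHull ℝ (S : Set E)) : ∃ T ⊆ S, IsPosCombination T x := by
  obtain ⟨w, hw0, hw1, hwx⟩ := Finset.mem_convexHull'.1 hx
  have hpos : ∀ t ∈ S, w t ≠ 0 → 0 < w t := fun t ht h => (hw0 t ht).lt_of_ne' h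
  refine ⟨S.filter (0 < w ·), Finset.filter_subset _ _, w, fun t ht => (Finset.mem_filter.1 ht).2,
    ?_, ?_⟩
  · rwa [Finset.sum_filter_of_ne hpos]
  · rwa [Finset.sum_filter_of_ne fun t ht h => hpos t ht (left_ne_zero_of_smul h)]

theorem IsExtreme.mem_of_add_smul_sub_mem {Q F : Set E} (hF : IsExtreme ℝ Q F) {x y : E}
    (hx : x ∈ F) (hy : y ∈ Q) {d : ℝ} (hd : 0 < d) (hz : x + d • (x - y) ∈ Q) : y ∈ F := by
  refine hF.2 hy hz hx
    ⟨d / (1 + d), 1 / (1 + d), by positivity, by positivity, by field_simp; ring, ?_⟩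
  match_scalars
  · ring
  · field_simp

/-- With `m` the least weight, `x + m • (x - y)` is again a convex combination of `T` for every
`y ∈ conv T`, so `x` lies inside a segment from `y` within `Q`. -/
theorem IsExtreme.convexHull_subset_of_isPosCombination {Q F : Set E} (hF : IsExtreme ℝ Q F)
    (hQ : Convex ℝ Q) {T : Finset E} (hTQ : (T : Set E) ⊆ Q) {x : E}
    (hx : IsPosCombination T x) (hxF : x ∈ F) : convexHull ℝ (T : Set E) ⊆ F := by
  obtain ⟨w, hw0, hw1, hwx⟩ := hx
  obtain ⟨t₀, ht₀, hmin⟩ :=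
    T.exists_min_image w (Finset.nonempty_of_sum_ne_zero (hw1 ▸ one_ne_zero))
  intro y hy
  obtain ⟨v, hv0, hv1, hvy⟩ := Finset.mem_convexHull'.1 hy
  have hv_le : ∀ t ∈ T, v t ≤ 1 := fun t ht => hv1 ▸ Finset.single_le_sum hv0 ht
  refine hF.mem_of_add_smul_sub_mem hxF (convexHull_min hTQ hQ hy) (hw0 t₀ ht₀) ?_
  have hz : x + w t₀ • (x - y) = ∑ t ∈ T, ((1 + w t₀) * w t - w t₀ * v t) • t := by
    simp only [sub_smul, mul_smul, Finset.sum_sub_distrib, ← Finset.smul_sum, hwx, hvy]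
    module
  rw [hz]
  refine hQ.sum_mem (fun t ht => ?_) ?_ fun t ht => hTQ ht
  · nlinarith [hmin t ht, hv_le t ht, hv0 t ht, hw0 t₀ ht₀]
  · simp only [Finset.sum_sub_distrib, ← Finset.mul_sum, hw1, hv1]
    ring

theorem IsExtreme.notMem_interior [TopologicalSpace E] [IsTopologicalAddGroup E]
    [ContinuousSMul ℝ E] {Q F : Set E} (hF : IsExtreme ℝ Q F) (hFQ : F ≠ Q) {x : E} (hx : x ∈ F) :
    x ∉ interior Q := by
  intro hxQ
  refine hFQ (hF.1.antisymm fun y hy => ?_)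
  have hnear : ∀ᶠ d in 𝓝 (0 : ℝ), x + d • (x - y) ∈ Q := by
    have hc : Continuous fun d : ℝ => x + d • (x - y) := by fun_prop
    exact hc.continuousAt.preimage_mem_nhds (by simpa using mem_interior_iff_mem_nhds.1 hxQ)
  obtain ⟨d, hdQ, hd⟩ := ((hnear.filter_mono nhdsWithin_le_nhds).and
    (self_mem_nhdsWithin (s := Set.Ioi 0))).exists
  exact hF.mem_of_add_smul_sub_mem hx hy hd hdQ

end ConvexCombination

theorem eventually_lt_of_isCompact {X ι : Type*} [TopologicalSpace X] {K : Set X}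
    (hK : IsCompact K) {B : Finset ι} {f : ι → X → ℝ} (hf : ∀ i ∈ B, ContinuousOn (f i) K)
    (hpos : ∀ x ∈ K, ∃ i ∈ B, 0 < f i x) :
    ∀ᶠ μ in 𝓝 (0 : ℝ), ∀ x ∈ K, ∃ i ∈ B, μ < f i x := by
  rcases K.eq_empty_or_nonempty with rfl | hKne
  · simp
  obtain ⟨i₀, hi₀, -⟩ := hpos _ hKne.some_mem
  obtain ⟨x₀, hx₀, hmin⟩ := hK.exists_isMinOn hKne (ContinuousOn.finset_sup'_apply ⟨i₀, hi₀⟩ hf)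
  obtain ⟨i, hi, hfi⟩ := hpos x₀ hx₀
  filter_upwards [eventually_lt_nhds (hfi.trans_le (B.le_sup' (f · x₀) hi))] with μ hμ x hx
  exact (Finset.lt_sup'_iff _).1 (hμ.trans_le (hmin hx))

section Polytope

variable {n : ℕ}

theorem dotZ_smul (a : Fin n → ℤ) (t : ℝ) (x : Fin n → ℝ) : dotZ a (t • x) = t * dotZ a x := by
  simp only [dotZ, Pi.smul_apply, smul_eq_mul, Finset.mul_sum]
  exact Finset.sum_congr rfl fun i _ => by ring

theorem continuous_dotZ (a : Fin n → ℤ) : Continuous (dotZ a) := by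
  unfold dotZ
  fun_prop

abbrev newtonPolytope (A : Finset (Fin n → ℤ)) : Set (Fin n → ℝ) :=
  convexHull ℝ (toR '' (A : Set (Fin n → ℤ)))

theorem newtonPolytope_eq (A : Finset (Fin n → ℤ)) :
    newtonPolytope A = convexHull ℝ ((A.image toR : Finset (Fin n → ℝ)) : Set (Fin n → ℝ)) := by
  rw [Finset.coe_image]

def IsProperFace (A : Finset (Fin n → ℤ)) (F : Set (Fin n → ℝ)) : Prop :=
  IsExtreme ℝ (newtonPolytope A) F ∧ F ≠ newtonPolytope A

def GapCondition (A : Finset (Fin n → ℤ)) (g : (Fin n → ℝ) → (Fin n → ℝ)) (μ : ℝ) : Prop :=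
  ∀ F, IsProperFace A F → ∀ p ∈ cone F, ∀ α ∈ A, toR α ∉ F →
    ∃ β ∈ A, toR β ∈ F ∧ dotZ α (g p) + μ * ‖p‖ < dotZ β (g p)

variable {A : Finset (Fin n → ℤ)} {F : Set (Fin n → ℝ)} {g : (Fin n → ℝ) → (Fin n → ℝ)}

theorem nonempty_of_zero_mem_interior (hQ : (0 : Fin n → ℝ) ∈ interior (newtonPolytope A)) :
    A.Nonempty := by
  rw [Finset.nonempty_iff_ne_empty]
  rintro rfl
  simp [newtonPolytope] at hQ

theorem IsProperFace.ne_zero (hQ : (0 : Fin n → ℝ) ∈ interior (newtonPolytope A))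
    (hF : IsProperFace A F) {u : Fin n → ℝ} (hu : u ∈ F) : u ≠ 0 := by
  rintro rfl
  exact hF.1.notMem_interior hF.2 hu hQ

theorem IsProperFace.ne_zero_of_mem_cone (hQ : (0 : Fin n → ℝ) ∈ interior (newtonPolytope A))
    (hF : IsProperFace A F) {p : Fin n → ℝ} (hp : p ∈ cone F) : p ≠ 0 := by
  obtain ⟨t, ht, u, hu, rfl⟩ := hp
  exact smul_ne_zero ht.ne' (hF.ne_zero hQ hu)

theorem gap_smul (hgh : ∀ t : ℝ, 0 < t → ∀ p : Fin n → ℝ, p ≠ 0 → g (t • p) = t • g p)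
    {u : Fin n → ℝ} (hu : u ≠ 0) {t : ℝ} (ht : 0 < t) {α β : Fin n → ℤ} {μ : ℝ}
    (h : dotZ α (g u) + μ * ‖u‖ < dotZ β (g u)) :
    dotZ α (g (t • u)) + μ * ‖t • u‖ < dotZ β (g (t • u)) := by
  rw [hgh t ht u hu, dotZ_smul, dotZ_smul, norm_smul, Real.norm_of_nonneg ht.le]
  nlinarith

theorem eventually_gap_of_type (hQ : (0 : Fin n → ℝ) ∈ interior (newtonPolytope A))
    (hgc : ContinuousOn g {p | p ≠ 0}) (hgap : GapCondition A g 0) {α : Fin n → ℤ} (hα : α ∈ A)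
    (B : Finset (Fin n → ℤ)) {T : Finset (Fin n → ℝ)} (hTQ : (T : Set (Fin n → ℝ)) ⊆ newtonPolytope A) :
    ∀ᶠ μ in 𝓝 (0 : ℝ), ∀ F, IsProperFace A F → A.filter (fun a => toR a ∈ F) = B →
      toR α ∉ F → ∀ u ∈ F, IsPosCombination T u →
        ∃ β ∈ B, dotZ α (g u) + μ * ‖u‖ < dotZ β (g u) := by
  by_cases hB : ∃ F₀, IsProperFace A F₀ ∧ A.filter (fun a => toR a ∈ F₀) = B ∧ toR α ∉ F₀ ∧
      ∃ u₀ ∈ F₀, IsPosCombination T u₀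
  swap
  · exact Eventually.of_forall fun μ F hF hFB hαF u hu hT => (hB ⟨F, hF, hFB, hαF, u, hu, hT⟩).elim
  obtain ⟨F₀, hF₀, rfl, hαF₀, u₀, hu₀, hT₀⟩ := hB
  set K := convexHull ℝ (T : Set (Fin n → ℝ))
  have hKF₀ : K ⊆ F₀ :=
    hF₀.1.convexHull_subset_of_isPosCombination (convex_convexHull ℝ _) hTQ hT₀ hu₀
  have hK0 : ∀ u ∈ K, u ≠ 0 := fun u hu => hF₀.ne_zero hQ (hKF₀ hu)
  have hcont : ∀ β ∈ A.filter (fun a => toR a ∈ F₀),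
      ContinuousOn (fun u => (dotZ β (g u) - dotZ α (g u)) / ‖u‖) K := fun β _ =>
    (((continuous_dotZ β).comp_continuousOn (hgc.mono hK0)).sub
      ((continuous_dotZ α).comp_continuousOn (hgc.mono hK0))).div continuous_norm.continuousOn
      fun u hu => norm_ne_zero_iff.2 (hK0 u hu)
  have hpos : ∀ u ∈ K, ∃ β ∈ A.filter (fun a => toR a ∈ F₀),
      0 < (dotZ β (g u) - dotZ α (g u)) / ‖u‖ := by
    intro u hu
    obtain ⟨β, hβA, hβF, hlt⟩ :=
      hgap F₀ hF₀ u ⟨1, one_pos, u, hKF₀ hu, (one_smul ℝ u).symm⟩ α hα hαF₀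
    exact ⟨β, Finset.mem_filter.2 ⟨hβA, hβF⟩, div_pos (by linarith) (norm_pos_iff.2 (hK0 u hu))⟩
  filter_upwards [eventually_lt_of_isCompact (T.finite_toSet.isCompact_convexHull ℝ) hcont hpos]
    with μ hμ F hF hFB hαF u hu hT
  obtain ⟨β, hβ, hlt⟩ := hμ u hT.mem_convexHull
  rw [lt_div_iff₀ (norm_pos_iff.2 (hK0 u hT.mem_convexHull))] at hlt
  exact ⟨β, hβ, by linarith⟩

theorem exists_pos_gapCondition (hQ : (0 : Fin n → ℝ) ∈ interior (newtonPolytope A))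
    (hgc : ContinuousOn g {p | p ≠ 0})
    (hgh : ∀ t : ℝ, 0 < t → ∀ p : Fin n → ℝ, p ≠ 0 → g (t • p) = t • g p)
    (hgap : GapCondition A g 0) : ∃ μ > 0, GapCondition A g μ := by
  have hev := (eventually_all_finset A).2 fun α hα => (eventually_all_finset A.powerset).2
    fun B _ => (eventually_all_finset (A.image toR).powerset).2 fun T hT =>
      eventually_gap_of_type hQ hgc hgap hα B (T := T) <| by
        rw [newtonPolytope_eq]
        exact (Finset.coe_subset.2 (Finset.mem_powerset.1 hT)).trans (subset_convexHull ℝ _)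
  obtain ⟨μ, hμ, hμ0⟩ :=
    ((hev.filter_mono nhdsWithin_le_nhds).and (self_mem_nhdsWithin (s := Set.Ioi 0))).exists
  refine ⟨μ, hμ0, fun F hF p hp α hα hαF => ?_⟩
  obtain ⟨t, ht, u, hu, rfl⟩ := hp
  obtain ⟨T, hTA, hT⟩ :=
    exists_isPosCombination_of_mem_convexHull (newtonPolytope_eq A ▸ hF.1.1 hu)
  obtain ⟨β, hβ, hlt⟩ := hμ α hα _ (Finset.mem_powerset.2 (Finset.filter_subset _ A)) T
    (Finset.mem_powerset.2 hTA) F hF rfl hαF u hu hT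
  obtain ⟨hβA, hβF⟩ := Finset.mem_filter.1 hβ
  exact ⟨β, hβA, hβF, gap_smul hgh (hF.ne_zero hQ hu) ht hlt⟩

end Polytope

section Neighborhood

variable {n : ℕ}

def skeletonNbhd (A : Finset (Fin n → ℤ)) (g : (Fin n → ℝ) → (Fin n → ℝ)) (η μ : ℝ) :
    Set ((Fin n → ℝ) × (Fin n → ℝ)) :=
  {q | q.1 ≠ 0 ∧ ∀ α ∈ A, (∃ m : ℤ, |dotZ α q.2 - m| < η) ∨
    ∃ β ∈ A, dotZ α (g q.1) + μ * ‖q.1‖ < dotZ β (g q.1)}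

variable {A : Finset (Fin n → ℤ)} {g : (Fin n → ℝ) → (Fin n → ℝ)} {η μ : ℝ}

theorem isOpen_skeletonNbhd (hgc : ContinuousOn g {p | p ≠ 0}) :
    IsOpen (skeletonNbhd A g η μ) := by
  refine isOpen_iff_mem_nhds.2 fun q hq => ?_
  have hg : ContinuousAt (fun q : (Fin n → ℝ) × (Fin n → ℝ) => g q.1) q :=
    (hgc.continuousAt (isOpen_ne.mem_nhds hq.1)).comp continuousAt_fst
  refine (continuousAt_fst.eventually_ne hq.1).and ((eventually_all_finset A).2 fun α hα => ?_)
  rcases hq.2 α hα with ⟨m, hm⟩ | ⟨β, hβ, hlt⟩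
  · have hc : Continuous fun q : (Fin n → ℝ) × (Fin n → ℝ) => |dotZ α q.2 - m| := by
      have := continuous_dotZ α
      fun_prop
    exact (hc.continuousAt.eventually_lt continuousAt_const hm).mono fun _ h => Or.inl ⟨m, h⟩
  · have hα' := (continuous_dotZ α).continuousAt.comp hg
    have hβ' := (continuous_dotZ β).continuousAt.comp hg
    exact ((hα'.add (continuousAt_const.mul continuousAt_fst.norm)).eventually_lt hβ' hlt).mono
      fun _ h => Or.inr ⟨β, hβ, h⟩

theorem smul_mem_skeletonNbhd
    (hgh : ∀ t : ℝ, 0 < t → ∀ p : Fin n → ℝ, p ≠ 0 → g (t • p) = t • g p)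
    {q : (Fin n → ℝ) × (Fin n → ℝ)} (hq : q ∈ skeletonNbhd A g η μ) {t : ℝ} (ht : 0 < t) :
    (t • q.1, q.2) ∈ skeletonNbhd A g η μ := by
  refine ⟨smul_ne_zero ht.ne' hq.1, fun α hα => ?_⟩
  rcases hq.2 α hα with h | ⟨β, hβ, hlt⟩
  · exact Or.inl h
  · exact Or.inr ⟨β, hβ, gap_smul hgh hq.1 ht hlt⟩

theorem skeleton_subset_skeletonNbhd (hQ : (0 : Fin n → ℝ) ∈ interior (newtonPolytope A))
    (hμ : GapCondition A g μ) (hη : 0 < η) : skeleton A ⊆ skeletonNbhd A g η μ := by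
  rintro q ⟨F, hFe, hFQ, hp, hint⟩
  have hF : IsProperFace A F := ⟨hFe, hFQ⟩
  refine ⟨hF.ne_zero_of_mem_cone hQ hp, fun α hα => ?_⟩
  by_cases hαF : toR α ∈ F
  · obtain ⟨m, hm⟩ := hint α hα hαF
    exact Or.inl ⟨m, by rwa [hm, sub_self, abs_zero]⟩
  · obtain ⟨β, hβ, -, hlt⟩ := hμ F hF q.1 hp α hα hαF
    exact Or.inr ⟨β, hβ, hlt⟩

end Neighborhood

section Sector

open Real

theorem abs_arg_lt_of_abs_im_lt {z : ℂ} {ε : ℝ} (hε : ε < π / 2) (hre : 0 < z.re)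
    (him : |z.im| < ε * z.re) : |z.arg| < ε := by
  have hε0 : 0 < ε := by
    by_contra h
    nlinarith [abs_nonneg z.im]
  have harg := abs_lt.1 (Complex.abs_arg_lt_pi_div_two_iff.2 (Or.inl hre))
  have htan : |tan z.arg| < tan ε := by
    rw [Complex.tan_arg, abs_div, abs_of_pos hre, div_lt_iff₀ hre]
    exact him.trans_le (mul_le_mul_of_nonneg_right (le_tan hε0.le hε) hre.le)
  rw [abs_lt] at htan ⊢
  constructor
  · rw [← tan_neg] at htan
    exact (strictMonoOn_tan.lt_iff_lt ⟨by linarith, by linarith⟩ harg).1 htan.1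
  · exact (strictMonoOn_tan.lt_iff_lt harg ⟨by linarith, hε⟩).1 htan.2

theorem add_ne_zero_and_abs_arg_lt {u v : ℂ} {D ε : ℝ} (hε0 : 0 < ε) (hε : ε < π / 2)
    (hD : 0 < D) (hre : 7 / 8 * D ≤ u.re) (him : |u.im| ≤ ε / 4 * D) (hv : ‖v‖ ≤ ε / 8 * D) :
    u + v ≠ 0 ∧ |(u + v).arg| < ε := by
  have hε2 : ε < 2 := by linarith [pi_lt_four]
  have hvre := (abs_le.1 ((Complex.abs_re_le_norm v).trans hv)).1
  have hvim := (Complex.abs_im_le_norm v).trans hv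
  have hre' : 5 / 8 * D ≤ (u + v).re := by
    rw [Complex.add_re]
    nlinarith
  have him' : |(u + v).im| ≤ 3 / 8 * ε * D := by
    rw [Complex.add_im]
    linarith [abs_add_le u.im v.im]
  have hpos : 0 < (u + v).re := by linarith
  refine ⟨fun h => by simp [h] at hpos, abs_arg_lt_of_abs_im_lt hε hpos ?_⟩
  nlinarith

end Sector

section Estimate

open Real

variable {n : ℕ}

def summand (c : (Fin n → ℤ) → ℂ) (x θ : Fin n → ℝ) (α : Fin n → ℤ) : ℂ :=
  c α * Complex.exp ((dotZ α x : ℂ) + 2 * (π : ℂ) * Complex.I * (dotZ α θ : ℂ))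

variable {c : (Fin n → ℤ) → ℂ} {x θ : Fin n → ℝ} {α : Fin n → ℤ}

theorem Wpot_eq_sum_summand (A : Finset (Fin n → ℤ)) : Wpot A c x θ = ∑ α ∈ A, summand c x θ α :=
  rfl

theorem norm_summand : ‖summand c x θ α‖ = ‖c α‖ * exp (dotZ α x) := by
  rw [summand, norm_mul, Complex.norm_exp]
  simp

theorem summand_eq (m : ℤ) :
    summand c x θ α = ((‖c α‖ * exp (dotZ α x) : ℝ) : ℂ) *
      Complex.exp ((((c α).arg + 2 * π * (dotZ α θ - m) : ℝ) : ℂ) * Complex.I) := by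
  have hper : (((c α).arg + 2 * π * (dotZ α θ - m) : ℝ) : ℂ) * Complex.I =
      ((c α).arg * Complex.I + 2 * π * Complex.I * dotZ α θ) - m * (2 * π * Complex.I) := by
    push_cast
    ring
  rw [hper, Complex.exp_sub, Complex.exp_int_mul_two_pi_mul_I, div_one, Complex.ofReal_mul,
    Complex.ofReal_exp, summand]
  conv_lhs => rw [← Complex.norm_mul_exp_arg_mul_I (c α)]
  simp only [mul_assoc, ← Complex.exp_add]
  ring_nf

theorem summand_mem_sector {ε : ℝ} {m : ℤ} (hε : ε < π / 2) (hc : |(c α).arg| < ε / 8)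
    (hm : |dotZ α θ - m| < ε / (16 * π)) :
    7 / 8 * ‖summand c x θ α‖ ≤ (summand c x θ α).re ∧
      |(summand c x θ α).im| ≤ ε / 4 * ‖summand c x θ α‖ := by
  set w := (c α).arg + 2 * π * (dotZ α θ - m)
  have hw : |w| ≤ ε / 4 :=
    calc |w| ≤ |(c α).arg| + 2 * π * |dotZ α θ - m| :=
          (abs_add_le _ _).trans_eq (by rw [abs_mul, abs_of_pos two_pi_pos])
      _ ≤ ε / 8 + 2 * π * (ε / (16 * π)) := by gcongr
      _ = ε / 4 := by field_simp; ring
  have hr : 0 ≤ ‖c α‖ * exp (dotZ α x) := by positivity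
  rw [norm_summand, summand_eq m, Complex.re_ofReal_mul, Complex.im_ofReal_mul,
    Complex.exp_ofReal_mul_I_re, Complex.exp_ofReal_mul_I_im, abs_mul, abs_of_nonneg hr]
  constructor
  · have hcos : 7 / 8 ≤ cos w := by
      nlinarith [one_sub_sq_div_two_le_cos (x := w), sq_abs w, abs_nonneg w, pi_lt_four]
    nlinarith
  · nlinarith [abs_sin_le_abs (x := w)]

theorem norm_sum_summand_le {A s : Finset (Fin n → ℤ)} (hsA : s ⊆ A) {a₀ : Fin n → ℤ}
    {L δ : ℝ} (hgap : ∀ a ∈ s, dotZ a x + L ≤ dotZ a₀ x)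
    (hδ : (∑ β ∈ A, ‖c β‖) * exp (-L) ≤ δ * ‖c a₀‖) :
    ‖∑ a ∈ s, summand c x θ a‖ ≤ δ * ‖summand c x θ a₀‖ :=
  calc ‖∑ a ∈ s, summand c x θ a‖
      ≤ ∑ a ∈ s, ‖c a‖ * exp (-L) * exp (dotZ a₀ x) := by
        refine (norm_sum_le _ _).trans (Finset.sum_le_sum fun a ha => ?_)
        rw [norm_summand, mul_assoc, ← exp_add]
        gcongr
        linarith [hgap a ha]
    _ ≤ (∑ β ∈ A, ‖c β‖) * exp (-L) * exp (dotZ a₀ x) := by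
        rw [← Finset.sum_mul, ← Finset.sum_mul]
        gcongr
    _ ≤ δ * ‖summand c x θ a₀‖ := by
        rw [norm_summand, ← mul_assoc]
        gcongr

theorem Wpot_ne_zero_and_abs_arg_lt {A : Finset (Fin n → ℤ)} {g : (Fin n → ℝ) → (Fin n → ℝ)}
    {ε μ R : ℝ} (hA : A.Nonempty) (hε0 : 0 < ε) (hε : ε < π / 2) (hμ : 0 < μ) (hR0 : 0 < R)
    (hc : ∀ α ∈ A, c α ≠ 0 ∧ |(c α).arg| < ε / 8)
    (hR : ∀ α ∈ A, (∑ β ∈ A, ‖c β‖) * exp (-(μ * R)) ≤ ε / 8 * ‖c α‖)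
    {q : (Fin n → ℝ) × (Fin n → ℝ)} (hq : q ∈ skeletonNbhd A g (ε / (16 * π)) μ)
    (hRq : R ≤ ‖q.1‖) :
    Wpot A c (g q.1) q.2 ≠ 0 ∧ |(Wpot A c (g q.1) q.2).arg| < ε := by
  set near : (Fin n → ℤ) → Prop := fun a => ∃ m : ℤ, |dotZ a q.2 - m| < ε / (16 * π)
  obtain ⟨a₀, ha₀, hmax⟩ := A.exists_max_image (fun a => dotZ a (g q.1)) hA
  have hfar : ∀ a ∈ A.filter (¬ near ·), dotZ a (g q.1) + μ * R ≤ dotZ a₀ (g q.1) := by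
    intro a ha
    obtain ⟨haA, hna⟩ := Finset.mem_filter.1 ha
    obtain ⟨β, hβ, hlt⟩ := (hq.2 a haA).resolve_left hna
    nlinarith [hmax β hβ, mul_le_mul_of_nonneg_left hRq hμ.le]
  have hnear₀ : near a₀ := by
    by_contra h
    nlinarith [hfar a₀ (Finset.mem_filter.2 ⟨ha₀, h⟩), mul_pos hμ hR0]
  have hD : ‖summand c (g q.1) q.2 a₀‖ ≤ ∑ a ∈ A.filter near, ‖summand c (g q.1) q.2 a‖ :=
    Finset.single_le_sum (fun a _ => norm_nonneg _) (Finset.mem_filter.2 ⟨ha₀, hnear₀⟩)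
  have hD0 : 0 < ‖summand c (g q.1) q.2 a₀‖ := by
    rw [norm_summand]
    exact mul_pos (norm_pos_iff.2 (hc a₀ ha₀).1) (exp_pos _)
  rw [Wpot_eq_sum_summand, ← Finset.sum_filter_add_sum_filter_not A near]
  refine add_ne_zero_and_abs_arg_lt hε0 hε (hD0.trans_le hD) ?_ ?_ ?_
  · rw [Complex.re_sum, Finset.mul_sum]
    refine Finset.sum_le_sum fun a ha => ?_
    obtain ⟨haA, m, hm⟩ := Finset.mem_filter.1 ha
    exact (summand_mem_sector hε (hc a haA).2 hm).1
  · rw [Complex.im_sum, Finset.mul_sum]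
    refine (Finset.abs_sum_le_sum_abs _ _).trans (Finset.sum_le_sum fun a ha => ?_)
    obtain ⟨haA, m, hm⟩ := Finset.mem_filter.1 ha
    exact (summand_mem_sector hε (hc a haA).2 hm).2
  · exact (norm_sum_summand_le (Finset.filter_subset _ A) hfar (hR a₀ ha₀)).trans
      (by gcongr)

end Estimate

theorem exists_pos_forall_mul_exp_neg_le {ι : Type*} (s : Finset ι) {a : ι → ℝ}
    (ha : ∀ i ∈ s, 0 < a i) (C : ℝ) {μ : ℝ} (hμ : 0 < μ) :
    ∃ R > 0, ∀ i ∈ s, C * Real.exp (-(μ * R)) ≤ a i := by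
  have hlim : Tendsto (fun R => C * Real.exp (-(μ * R))) atTop (𝓝 0) := by
    simpa using (Real.tendsto_exp_neg_atTop_nhds_zero.comp
      (tendsto_id.const_mul_atTop hμ)).const_mul C
  obtain ⟨R, hR, hR0⟩ := ((eventually_all_finset s).2 fun i hi =>
    hlim.eventually (eventually_le_nhds (ha i hi))).and (eventually_gt_atTop 0) |>.exists
  exact ⟨R, hR0, hR⟩

theorem stmt_5_general (n : ℕ)
    (A : Finset (Fin n → ℤ))
    (hQ : (0 : Fin n → ℝ) ∈ interior (convexHull ℝ (toR '' (A : Set (Fin n → ℤ)))))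
    (g : (Fin n → ℝ) → (Fin n → ℝ))
    (hgc : ContinuousOn g {p | p ≠ 0})
    (hgh : ∀ t : ℝ, 0 < t → ∀ p : Fin n → ℝ, p ≠ 0 → g (t • p) = t • g p)
    (hgap : ∀ F : Set (Fin n → ℝ),
      IsExtreme ℝ (convexHull ℝ (toR '' (A : Set (Fin n → ℤ)))) F →
      F ≠ convexHull ℝ (toR '' (A : Set (Fin n → ℤ))) →
      ∀ p ∈ cone F, ∀ α ∈ A, toR α ∉ F →
        ∃ β ∈ A, toR β ∈ F ∧ dotZ α (g p) < dotZ β (g p)) :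
    ∀ ε'' : ℝ, 0 < ε'' → ε'' < Real.pi / 2 →
      ∃ ε' : ℝ, 0 < ε' ∧
        ∀ c : (Fin n → ℤ) → ℂ, (∀ α ∈ A, c α ≠ 0 ∧ |(c α).arg| < ε') →
          ∃ V : Set ((Fin n → ℝ) × (Fin n → ℝ)), IsOpen V ∧
            (∀ q ∈ V, q.1 ≠ 0) ∧
            (∀ q ∈ V, ∀ t : ℝ, 0 < t → (t • q.1, q.2) ∈ V) ∧
            skeleton A ⊆ V ∧
            ∃ R : ℝ, 0 < R ∧
              ∀ q ∈ V, R ≤ ‖q.1‖ →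
                Wpot A c (g q.1) q.2 ≠ 0 ∧ |(Wpot A c (g q.1) q.2).arg| < ε'' := by
  intro ε hε0 hε
  obtain ⟨μ, hμ, hμgap⟩ := exists_pos_gapCondition hQ hgc hgh
    fun F hF p hp α hα hαF => by simpa using hgap F hF.1 hF.2 p hp α hα hαF
  refine ⟨ε / 8, by positivity, fun c hc => ?_⟩
  obtain ⟨R, hR0, hR⟩ := exists_pos_forall_mul_exp_neg_le A (a := fun α => ε / 8 * ‖c α‖)
    (fun α hα => mul_pos (by positivity) (norm_pos_iff.2 (hc α hα).1)) (∑ β ∈ A, ‖c β‖) hμ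
  exact ⟨skeletonNbhd A g (ε / (16 * Real.pi)) μ, isOpen_skeletonNbhd hgc, fun q hq => hq.1,
    fun q hq t ht => smul_mem_skeletonNbhd hgh hq ht,
    skeleton_subset_skeletonNbhd hQ hμgap (by positivity), R, hR0,
    fun q hq hRq => Wpot_ne_zero_and_abs_arg_lt (nonempty_of_zero_mem_interior hQ) hε0 hε hμ hR0
      hc hR hq hRq⟩

/-- Let `A ⊂ ℤⁿ` be finite with `0 ∈ int conv(A)` and let `g` be
continuous, positively homogeneous of degree 1, and satisfy the gap condition
`max_{α ∈ A∖A_F}⟨α, g p⟩ < max_{β ∈ A_F}⟨β, g p⟩` along the cone over every proper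
face `F`.  Then for every `ε'' ∈ (0, π/2)` there is `ε' > 0` such that for all nonzero
coefficients with `|arg c_α| < ε'` there are a conical open neighborhood `V` of the
skeleton `Λ` (inside `(ℝⁿ∖{0}) × ℝⁿ`) and `R > 0` with: for `(p,θ) ∈ V`, `‖p‖ ≥ R`,
the value `W(g p, θ)` is nonzero with `|arg W(g p, θ)| < ε''`. -/
theorem stmt_5 (n : ℕ) (hn : 1 ≤ n)
    (A : Finset (Fin n → ℤ))
    (hQ : (0 : Fin n → ℝ) ∈ interior (convexHull ℝ (toR '' (A : Set (Fin n → ℤ)))))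
    (g : (Fin n → ℝ) → (Fin n → ℝ))
    (hgc : ContinuousOn g {p | p ≠ 0})
    (hgh : ∀ t : ℝ, 0 < t → ∀ p : Fin n → ℝ, p ≠ 0 → g (t • p) = t • g p)
    (hgap : ∀ F : Set (Fin n → ℝ),
      IsExtreme ℝ (convexHull ℝ (toR '' (A : Set (Fin n → ℤ)))) F →
      F ≠ convexHull ℝ (toR '' (A : Set (Fin n → ℤ))) →
      ∀ p ∈ cone F, ∀ α ∈ A, toR α ∉ F →
        ∃ β ∈ A, toR β ∈ F ∧ dotZ α (g p) < dotZ β (g p)) :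
    ∀ ε'' : ℝ, 0 < ε'' → ε'' < Real.pi / 2 →
      ∃ ε' : ℝ, 0 < ε' ∧
        ∀ c : (Fin n → ℤ) → ℂ, (∀ α ∈ A, c α ≠ 0 ∧ |(c α).arg| < ε') →
          ∃ V : Set ((Fin n → ℝ) × (Fin n → ℝ)), IsOpen V ∧
            (∀ q ∈ V, q.1 ≠ 0) ∧
            (∀ q ∈ V, ∀ t : ℝ, 0 < t → (t • q.1, q.2) ∈ V) ∧
            skeleton A ⊆ V ∧
            ∃ R : ℝ, 0 < R ∧
              ∀ q ∈ V, R ≤ ‖q.1‖ →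
                Wpot A c (g q.1) q.2 ≠ 0 ∧ |(Wpot A c (g q.1) q.2).arg| < ε'' :=
  stmt_5_general n A hQ g hgc hgh hgap

end
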